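/- Let M be a matroid on a finite ground set E, and let F ⊊ G be flats of M with k := rk(G) − rk(F) ≥ 2. Then the vector Σ_{l=2}^{k} (−1)^{k−l+1} · Σ_{F = F^(0) ⋖ F^(1) ⋖ ⋯ ⋖ F^(l), F^(l) ⊆ G} e_{F^(l−1)} lies in the ℝ-linear span of {e_F, e_G} in ℝ^E, where the inner sums range over all chains F = F^(0) ⋖ ⋯ ⋖ F^(l) of flats of M with F^(l) ⊆ G. (This is the rearranged degenerate case k = rk(G) − rk(F) of the higher balancing relations: after substituting consecutive flag members F = F_i and G = F_{i+1}, the displayed alternating combination of the vectors e_{F^(l−1)} lies in the linear subspace spanned by the cone of the flag.) -/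

import Mathlib

open scoped BigOperators

/-- The `0-1` indicator vector `e_F ∈ ℝ^E` of a subset `F ⊆ E`. -/
noncomputable def eVec {α : Type*} (F : Set α) : α → ℝ := F.indicator 1

/-- The rank of a set `X` in a matroid `M`: the largest cardinality of an
independent subset of `X`. -/
noncomputable def mrk {α : Type*} (M : Matroid α) (X : Set α) : ℕ :=
  sSup {n : ℕ | ∃ I, M.Indep I ∧ I ⊆ X ∧ I.ncard = n}

/-- `F'` covers `F` in the lattice of flats of `M`: both are flats, `F ⊊ F'`,
and there is no flat strictly between them. -/
def MCov {α : Type*} (M : Matroid α) (F F' : Set α) : Prop :=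
  M.IsFlat F ∧ M.IsFlat F' ∧ F ⊂ F' ∧ ¬ ∃ F'', M.IsFlat F'' ∧ F ⊂ F'' ∧ F'' ⊂ F'

/-- A chain `F = F⁽⁰⁾ ⋖ F⁽¹⁾ ⋖ ⋯ ⋖ F⁽ˡ⁾` of flats of `M` with `F⁽ˡ⁾ ⊆ G`. -/
def IsCovChain {α : Type*} (M : Matroid α) (F G : Set α) (l : ℕ)
    (c : Fin (l + 1) → Set α) : Prop :=
  c 0 = F ∧ (∀ j : Fin l, MCov M (c j.castSucc) (c j.succ)) ∧ c (Fin.last l) ⊆ G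

/-!
Write `W l = Σ e_{F⁽ˡ⁾}` and `V l = Σ e_{F⁽ˡ⁻¹⁾}`, summed over the chains
`F = F⁽⁰⁾ ⋖ ⋯ ⋖ F⁽ˡ⁾ ⊆ G`. For flats `H ⊆ G`, every `i ∈ G \ H` lies in exactly one cover of `H`
inside `G`, namely `cl (H ∪ {i})`, so the sets `A \ H` over these covers `A` partition `G \ H`.
Grouping the chains of length `m + 1` by their first `m` steps therefore gives
`W (m + 1) - V (m + 1) = N m • e_G - W m`, where `N m` counts the chains of length `m`. Modulo `e_G`
the alternating sum of the `V l` then telescopes to `± W 1 - W k`. Taking `m = 0` shows that `W 1`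
is a combination of `e_F` and `e_G`, and every chain of length `k = rk G - rk F` ends at `G`, so
`W k` is a multiple of `e_G`.
-/

section

open Set

variable {α : Type*} {M : Matroid α} {F G H H' : Set α} {x : α}

lemma Submodule.finsum_mem {R β E : Type*} [Semiring R] [AddCommMonoid E] [Module R E]
    (S : Submodule R E) {s : Set β} {f : β → E} (hf : ∀ b ∈ s, f b ∈ S) : ∑ᶠ b ∈ s, f b ∈ S :=
  finsum_mem_induction (· ∈ S) S.zero_mem (fun _ _ ↦ S.add_mem) hf

lemma eVec_sdiff {s t : Set α} (h : s ⊆ t) : eVec (t \ s) = eVec t - eVec s :=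
  indicator_sdiff h 1

lemma eVec_biUnion {ι : Type*} {s : Set ι} (hs : s.Finite) {t : ι → Set α}
    (h : s.PairwiseDisjoint t) : eVec (⋃ i ∈ s, t i) = ∑ᶠ i ∈ s, eVec (t i) := by
  have h' : (hs.toFinset : Set ι).PairwiseDisjoint t := by rwa [hs.coe_toFinset]
  have hU : ⋃ i ∈ s, t i = ⋃ i ∈ hs.toFinset, t i := by simp
  rw [finsum_mem_eq_finite_toFinset_sum _ hs, eVec, hU, Finset.indicator_biUnion _ _ h']
  ext a
  simp [eVec]

lemma mrk_eq_eRk [Finite α] (M : Matroid α) (X : Set α) : (mrk M X : ℕ∞) = M.eRk X := by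
  obtain ⟨I, hI⟩ := M.exists_isBasis' X
  have hmax : IsGreatest {n | ∃ J, M.Indep J ∧ J ⊆ X ∧ J.ncard = n} I.ncard := by
    refine ⟨⟨I, hI.indep, hI.subset, rfl⟩, ?_⟩
    rintro _ ⟨J, hJ, hJX, rfl⟩
    have := hJ.encard_le_eRk_of_subset hJX
    rw [← hI.encard_eq_eRk, ← J.toFinite.cast_ncard_eq, ← I.toFinite.cast_ncard_eq] at this
    exact_mod_cast this
  rw [mrk, hmax.csSup_eq, I.toFinite.cast_ncard_eq, hI.encard_eq_eRk]

lemma mrk_mono [Finite α] {X Y : Set α} (h : X ⊆ Y) : mrk M X ≤ mrk M Y := by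
  have := M.eRk_mono h
  rwa [← mrk_eq_eRk, ← mrk_eq_eRk, Nat.cast_le] at this

lemma Matroid.IsFlat.closure_subset_of_subset {X : Set α} (hF : M.IsFlat F) (h : X ⊆ F) :
    M.closure X ⊆ F :=
  hF.closure ▸ M.closure_subset_closure h

lemma Matroid.IsFlat.mcov_closure_insert (hH : M.IsFlat H) (hx : x ∈ M.E) (hxH : x ∉ H) :
    MCov M H (M.closure (insert x H)) := by
  have hHE : insert x H ⊆ M.E := insert_subset hx hH.subset_ground
  have hxcl : x ∈ M.closure (insert x H) := M.mem_closure_of_mem (mem_insert x H) hHE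
  refine ⟨hH, M.isFlat_closure _, ssubset_of_subset_not_subset
    ((subset_insert x H).trans (M.subset_closure _ hHE)) (fun h ↦ hxH (h hxcl)), ?_⟩
  rintro ⟨K, hK, hHK, hKcl⟩
  obtain ⟨y, hyK, hyH⟩ := exists_of_ssubset hHK
  have hxy : x ∈ M.closure (insert y H) :=
    (Matroid.closure_exchange ⟨hKcl.subset hyK, by rwa [hH.closure]⟩).1
  have hxK : x ∈ K := hK.closure_subset_of_subset (insert_subset hyK hHK.subset) hxy
  exact hKcl.not_subset (hK.closure_subset_of_subset (insert_subset hxK hHK.subset))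

namespace MCov

lemma eq_closure_insert (h : MCov M H H') (hx : x ∈ H' \ H) :
    H' = M.closure (insert x H) := by
  obtain ⟨hH, hH', hHH', hno⟩ := h
  have hsub : M.closure (insert x H) ⊆ H' :=
    hH'.closure_subset_of_subset (insert_subset hx.1 hHH'.subset)
  by_contra hne
  refine hno ⟨_, M.isFlat_closure _, ?_, ssubset_of_subset_of_ne hsub (Ne.symm hne)⟩
  exact (hH.mcov_closure_insert (hH'.subset_ground hx.1) hx.2).2.2.1

lemma eRk_eq (h : MCov M H H') : M.eRk H' = M.eRk H + 1 := by
  obtain ⟨x, hxH', hxH⟩ := exists_of_ssubset h.2.2.1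
  rw [h.eq_closure_insert ⟨hxH', hxH⟩, Matroid.eRk_closure_eq]
  exact Matroid.eRk_insert_eq_add_one ⟨h.2.1.subset_ground hxH', by rwa [h.1.closure]⟩

end MCov

lemma pairwiseDisjoint_mcov_sdiff (H : Set α) : {A | MCov M H A}.PairwiseDisjoint (· \ H) := by
  intro A hA A' hA' hne
  refine disjoint_left.2 fun y hy hy' ↦ hne ?_
  rw [MCov.eq_closure_insert hA hy, MCov.eq_closure_insert hA' hy']

lemma biUnion_mcov_sdiff (hH : M.IsFlat H) (hG : M.IsFlat G) (hHG : H ⊆ G) :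
    ⋃ A ∈ {A | MCov M H A ∧ A ⊆ G}, A \ H = G \ H := by
  refine subset_antisymm (iUnion₂_subset fun A hA ↦ sdiff_subset_sdiff_left hA.2) ?_
  intro y ⟨hyG, hyH⟩
  refine mem_biUnion ⟨hH.mcov_closure_insert (hG.subset_ground hyG) hyH,
    hG.closure_subset_of_subset (insert_subset hyG hHG)⟩ ⟨?_, hyH⟩
  exact M.mem_closure_of_mem (mem_insert y H)
    (insert_subset (hG.subset_ground hyG) hH.subset_ground)

lemma finsum_eVec_mcov_sdiff [Finite α] (hH : M.IsFlat H) (hG : M.IsFlat G) (hHG : H ⊆ G) :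
    ∑ᶠ A ∈ {A | MCov M H A ∧ A ⊆ G}, eVec (A \ H) = eVec (G \ H) := by
  rw [← biUnion_mcov_sdiff hH hG hHG, eVec_biUnion (toFinite _)
    ((pairwiseDisjoint_mcov_sdiff H).subset fun A hA ↦ hA.1)]

namespace IsCovChain

variable {l : ℕ} {c : Fin (l + 1) → Set α}

lemma monotone (hc : IsCovChain M F G l c) : Monotone c :=
  Fin.monotone_iff_le_succ.2 fun j ↦ (hc.2.1 j).2.2.1.subset

lemma subset (hc : IsCovChain M F G l c) (j : Fin (l + 1)) : c j ⊆ G :=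
  (hc.monotone (Fin.le_last j)).trans hc.2.2

lemma isFlat (hc : IsCovChain M F G l c) (hF : M.IsFlat F) (j : Fin (l + 1)) :
    M.IsFlat (c j) := by
  cases j using Fin.cases with
  | zero => exact hc.1 ▸ hF
  | succ j => exact (hc.2.1 j).2.1

lemma eRk_eq (hc : IsCovChain M F G l c) (j : Fin (l + 1)) : M.eRk (c j) = M.eRk F + j := by
  induction j using Fin.induction with
  | zero => simp [hc.1]
  | succ j ih => rw [(hc.2.1 j).eRk_eq, ih]; simp [add_assoc]

lemma last_eq [M.RankFinite] (hc : IsCovChain M F G l c) (hF : M.IsFlat F) (hG : M.IsFlat G)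
    (hlen : M.eRk G = M.eRk F + l) : c (Fin.last l) = G := by
  have hcl := (M.isRkFinite_set _).closure_eq_closure_of_subset_of_eRk_ge_eRk (hc.subset _)
    (by rw [hc.eRk_eq, hlen, Fin.val_last])
  rwa [(hc.isFlat hF _).closure, hG.closure] at hcl

end IsCovChain

lemma isCovChain_snoc_iff {m : ℕ} {c : Fin (m + 1) → Set α} {A : Set α} :
    IsCovChain M F G (m + 1) (Fin.snoc c A) ↔
      IsCovChain M F G m c ∧ MCov M (c (Fin.last m)) A ∧ A ⊆ G := by
  simp only [IsCovChain, Fin.forall_fin_succ' (n := m), Fin.succ_castSucc, Fin.succ_last,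
    Fin.snoc_castSucc, Fin.snoc_last, ← Fin.castSucc_zero]
  refine ⟨fun ⟨h0, ⟨hcov, hA⟩, hAG⟩ ↦ ⟨⟨h0, hcov, hA.2.2.1.subset.trans hAG⟩, hA, hAG⟩,
    fun ⟨⟨h0, hcov, _⟩, hA, hAG⟩ ↦ ⟨h0, ⟨hcov, hA⟩, hAG⟩⟩

lemma setOf_isCovChain_succ (m : ℕ) :
    {c | IsCovChain M F G (m + 1) c} = ⋃ c' ∈ {c' | IsCovChain M F G m c'},
      Fin.snoc c' '' {A | MCov M (c' (Fin.last m)) A ∧ A ⊆ G} := by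
  ext c
  simp only [mem_ofPred_eq, mem_iUnion, mem_image, exists_prop]
  constructor
  · intro hc
    rw [← Fin.snoc_init_self c, isCovChain_snoc_iff] at hc
    exact ⟨Fin.init c, hc.1, c (Fin.last _), hc.2, Fin.snoc_init_self c⟩
  · rintro ⟨c', hc', A, hA, rfl⟩
    exact isCovChain_snoc_iff.2 ⟨hc', hA⟩

lemma finsum_isCovChain_succ [Finite α] {E : Type*} [AddCommMonoid E] (m : ℕ)
    (g : (Fin (m + 2) → Set α) → E) :
    ∑ᶠ c ∈ {c | IsCovChain M F G (m + 1) c}, g c = ∑ᶠ c' ∈ {c' | IsCovChain M F G m c'},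
      ∑ᶠ A ∈ {A | MCov M (c' (Fin.last m)) A ∧ A ⊆ G}, g (Fin.snoc c' A) := by
  have hdisj : {c' | IsCovChain M F G m c'}.PairwiseDisjoint fun c' ↦
      Fin.snoc (α := fun _ ↦ Set α) c' '' {A | MCov M (c' (Fin.last m)) A ∧ A ⊆ G} := by
    intro c₁ _ c₂ _ hne
    refine disjoint_left.2 ?_
    rintro _ ⟨A₁, -, rfl⟩ ⟨A₂, -, h⟩
    exact hne (Fin.snoc_injective2 h).1.symm
  rw [setOf_isCovChain_succ, finsum_mem_biUnion hdisj (toFinite _) fun _ _ ↦ toFinite _]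
  refine finsum_mem_congr rfl fun c' _ ↦ finsum_mem_image ?_
  exact fun A₁ _ A₂ _ h ↦ (Fin.snoc_injective2 h).2

lemma finsum_eVec_last_sdiff [Finite α] (hF : M.IsFlat F) (hG : M.IsFlat G) (m : ℕ) :
    ∑ᶠ c ∈ {c | IsCovChain M F G (m + 1) c}, eVec (c (Fin.last (m + 1)) \ c (Fin.last m).castSucc)
      = ∑ᶠ c ∈ {c | IsCovChain M F G m c}, eVec (G \ c (Fin.last m)) := by
  rw [finsum_isCovChain_succ]
  refine finsum_mem_congr rfl fun c hc ↦ ?_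
  simp only [Fin.snoc_last, Fin.snoc_castSucc]
  exact finsum_eVec_mcov_sdiff (hc.isFlat hF _) hG (hc.subset _)

lemma finsum_eVec_penultimate [Finite α] (hF : M.IsFlat F) (hG : M.IsFlat G) (m : ℕ) :
    ∑ᶠ c ∈ {c | IsCovChain M F G (m + 1) c}, eVec (c (Fin.last m).castSucc) =
      ∑ᶠ c ∈ {c | IsCovChain M F G (m + 1) c}, eVec (c (Fin.last (m + 1))) +
        ∑ᶠ c ∈ {c | IsCovChain M F G m c}, eVec (c (Fin.last m)) -
          ∑ᶠ _ ∈ {c | IsCovChain M F G m c}, eVec G := by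
  have h := finsum_eVec_last_sdiff hF hG m
  rw [finsum_mem_congr rfl fun c hc ↦ eVec_sdiff (hc.monotone (Fin.le_last _)),
    finsum_mem_congr rfl fun c hc ↦ eVec_sdiff (hc.subset (Fin.last m)),
    finsum_mem_sub_distrib _ _ (toFinite _), finsum_mem_sub_distrib _ _ (toFinite _)] at h
  linear_combination (norm := abel_nf) -h

section Telescope

variable {R E : Type*} [Ring R] [AddCommGroup E] [Module R E]

lemma sum_Icc_neg_one_pow_smul_add_pred (w : ℕ → E) {k : ℕ} (hk : 1 ≤ k) :
    ∑ l ∈ Finset.Icc 2 k, (-1 : R) ^ (k - l + 1) • (w l + w (l - 1)) =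
      (-1 : R) ^ (k - 1) • w 1 - w k := by
  induction k, hk using Nat.le_induction with
  | base => simp
  | succ k hk ih =>
    rw [Finset.sum_Icc_succ_top (by omega), Finset.sum_congr rfl fun l hl ↦ by
      rw [show k + 1 - l + 1 = (k - l + 1) + 1 by grind, pow_succ, mul_neg_one,
        neg_smul], Finset.sum_neg_distrib, ih]
    obtain ⟨j, rfl⟩ : ∃ j, k = j + 1 := ⟨k - 1, by omega⟩
    simp only [Nat.add_sub_cancel, Nat.sub_self, zero_add, pow_one, neg_smul, one_smul]
    rw [pow_succ, mul_neg_one, neg_smul]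
    abel

lemma sum_Icc_neg_one_pow_smul_mem {S : Submodule R E} {v w : ℕ → E}
    (hvw : ∀ m, v (m + 1) - (w (m + 1) + w m) ∈ S) (hw₁ : w 1 ∈ S) {k : ℕ} (hwk : w k ∈ S) :
    ∑ l ∈ Finset.Icc 2 k, (-1 : R) ^ (k - l + 1) • v l ∈ S := by
  rcases Nat.eq_zero_or_pos k with rfl | hk
  · simp
  have hsplit : ∑ l ∈ Finset.Icc 2 k, (-1 : R) ^ (k - l + 1) • v l =
      ∑ l ∈ Finset.Icc 2 k, (-1 : R) ^ (k - l + 1) • (v l - (w l + w (l - 1))) +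
        ((-1 : R) ^ (k - 1) • w 1 - w k) := by
    rw [← sum_Icc_neg_one_pow_smul_add_pred w hk, ← Finset.sum_add_distrib]
    simp [smul_sub]
  rw [hsplit]
  refine S.add_mem (S.sum_mem fun l hl ↦ S.smul_mem _ ?_) (S.sub_mem (S.smul_mem _ hw₁) hwk)
  obtain ⟨m, rfl⟩ : ∃ m, l = m + 1 := ⟨l - 1, by grind⟩
  exact hvw m

end Telescope

end

/-- The degenerate rearranged case of higher balancing: for flats `F ⊊ G` with
`k = rk G − rk F ≥ 2`, the vector
`Σ_{l=2}^{k} (−1)^{k−l+1} Σ_{F=F⁽⁰⁾⋖⋯⋖F⁽ˡ⁾⊆G} e_{F⁽ˡ⁻¹⁾}`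
lies in the linear span of `{e_F, e_G}`. -/
theorem degenerate_higher_balancing {α : Type*} [Fintype α] (M : Matroid α)
    (F G : Set α) (hF : M.IsFlat F) (hG : M.IsFlat G) (hFG : F ⊂ G)
    (k : ℕ) (hk : k = mrk M G - mrk M F) :
    (∑ l ∈ Finset.Icc 2 k, ((-1 : ℝ) ^ (k - l + 1)) •
        (∑ᶠ c ∈ {c : Fin (l + 1) → Set α | IsCovChain M F G l c},
          eVec (c ⟨l - 1, by omega⟩)))
      ∈ Submodule.span ℝ ({eVec F, eVec G} : Set (α → ℝ)) := by
  set S := Submodule.span ℝ ({eVec F, eVec G} : Set (α → ℝ))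
  have hFS : eVec F ∈ S := Submodule.subset_span (Set.mem_insert _ _)
  have hGS : eVec G ∈ S := Submodule.subset_span (Set.mem_insert_of_mem _ rfl)
  set w : ℕ → α → ℝ := fun l ↦
    ∑ᶠ c ∈ {c : Fin (l + 1) → Set α | IsCovChain M F G l c}, eVec (c (Fin.last l))
  have hvw : ∀ m, ∑ᶠ c ∈ {c : Fin (m + 2) → Set α | IsCovChain M F G (m + 1) c},
      eVec (c ⟨m + 1 - 1, by omega⟩) - (w (m + 1) + w m) ∈ S := fun m ↦ by
    rw [show (⟨m + 1 - 1, _⟩ : Fin (m + 2)) = (Fin.last m).castSucc from Fin.ext (by simp),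
      finsum_eVec_penultimate hF hG m, sub_sub_cancel_left]
    exact S.neg_mem (S.finsum_mem fun _ _ ↦ hGS)
  have hw₁ : w 1 ∈ S := by
    have hinit : ∀ {l} (c : Fin (l + 1) → Set α), IsCovChain M F G l c → eVec (c 0) ∈ S :=
      fun c hc ↦ hc.1 ▸ hFS
    exact (S.add_mem_iff_left (S.finsum_mem fun c hc ↦ hinit c hc)).1
      ((S.sub_mem_iff_right (S.finsum_mem fun c hc ↦ hinit c hc)).1 (hvw 0))
  have hlen : M.eRk G = M.eRk F + k := by
    have := mrk_mono (M := M) hFG.subset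
    rw [← mrk_eq_eRk, ← mrk_eq_eRk]
    exact_mod_cast (show mrk M G = mrk M F + k by omega)
  refine sum_Icc_neg_one_pow_smul_mem hvw hw₁ (S.finsum_mem fun c hc ↦ ?_)
  rwa [hc.last_eq hF hG hlen]
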